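/- Let ν > 0, T > 0, a ∈ (0,1), ε ∈ (0,1), and let u_ε(t,x) = A/((t+ε)(a−x+ε)) for (t,x) ∈ [0,T] × [0,a], where A > 0 is a constant. Then ∂ₜu_ε − ν ∂ₓ²u_ε + u_ε ∂ₓu_ε = A·(−(a−x+ε)² − 2ν(t+ε) + A)/((t+ε)²(a−x+ε)³) for all (t,x) ∈ [0,T] × [0,a]. Moreover, if A ≥ 4ν(T+1) + 2(a+1)², then ∂ₜu_ε − ν ∂ₓ²u_ε + u_ε ∂ₓu_ε ≥ A²/(2(T+1)²(a+1)³). -/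

import Mathlib

/-! Every derivative of `u_ε` is explicit, so the identity is a rational-function computation. On the
rectangle `t + ε ≤ T + 1` and `a - x + ε ≤ a + 1`, so the hypothesis on `A` makes the numerator
`A - (a - x + ε)² - 2ν(t + ε)` at least `A / 2`, while the denominator is at most `(T + 1)² (a + 1)³`. -/

noncomputable def burgersOperator (ν : ℝ) (u : ℝ → ℝ → ℝ) (t x : ℝ) : ℝ :=
  deriv (fun s => u s x) t - ν * deriv (deriv (fun y => u t y)) x
    + u t x * deriv (fun y => u t y) x

theorem hasDerivAt_div_add_const (c ε t : ℝ) (h : t + ε ≠ 0) :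
    HasDerivAt (fun s => c / (s + ε)) (-c / (t + ε) ^ 2) t :=
  ((hasDerivAt_const t c).div ((hasDerivAt_id t).add_const ε) h).congr_deriv (by simp)

theorem hasDerivAt_div_sub_pow (c b y : ℝ) (n : ℕ) (h : b - y ≠ 0) :
    HasDerivAt (fun z => c / (b - z) ^ n) (n * c / (b - y) ^ (n + 1)) y := by
  refine ((hasDerivAt_const y c).div (((hasDerivAt_id y).const_sub b).pow n)
    (pow_ne_zero n h)).congr_deriv ?_
  rcases n with _ | m
  · simp
  · field_simp
    simp
    ring

theorem burgersOperator_supersolution_eq (ν A a ε t x : ℝ) (ht : t + ε ≠ 0) (hx : a - x + ε ≠ 0) :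
    burgersOperator ν (fun t x => A / ((t + ε) * (a - x + ε))) t x
      = A * (-(a - x + ε) ^ 2 - 2 * ν * (t + ε) + A) / ((t + ε) ^ 2 * (a - x + ε) ^ 3) := by
  set c := A / (t + ε)
  set b := a + ε
  have hx' : b - x ≠ 0 := by rwa [add_sub_right_comm]
  have htime : (fun s => A / ((s + ε) * (a - x + ε))) = fun s => A / (a - x + ε) / (s + ε) := by
    ext s; rw [div_div, mul_comm]
  have hspace : (fun y => A / ((t + ε) * (a - y + ε))) = fun y => c / (b - y) ^ 1 := by
    ext y; rw [pow_one, div_div, add_sub_right_comm]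
  have hdx : deriv (fun y => c / (b - y) ^ 1) =ᶠ[nhds x] fun y => c / (b - y) ^ 2 := by
    have : ∀ᶠ y in nhds x, b - y ≠ 0 :=
      (continuous_const.sub continuous_id).continuousAt.eventually_ne hx'
    filter_upwards [this] with y hy
    rw [(hasDerivAt_div_sub_pow c b y 1 hy).deriv]
    norm_num
  unfold burgersOperator
  simp only [hspace, htime]
  rw [(hasDerivAt_div_add_const _ _ t ht).deriv, hdx.deriv_eq,
    (hasDerivAt_div_sub_pow c b x 2 hx').deriv, (hasDerivAt_div_sub_pow c b x 1 hx').deriv,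
    show b - x = a - x + ε by ring]
  simp only [c]
  field_simp
  ring

theorem sq_div_le_burgers_residual {ν A p q P Q : ℝ} (hν : 0 ≤ ν) (hp : 0 < p) (hpP : p ≤ P)
    (hq : 0 < q) (hqQ : q ≤ Q) (hA : 4 * ν * P + 2 * Q ^ 2 ≤ A) :
    A ^ 2 / (2 * P ^ 2 * Q ^ 3) ≤ A * (-q ^ 2 - 2 * ν * p + A) / (p ^ 2 * q ^ 3) := by
  have hA0 : 0 ≤ A := by nlinarith [mul_nonneg hν (hp.trans_le hpP).le]
  have hhalf : A / 2 ≤ -q ^ 2 - 2 * ν * p + A := by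
    nlinarith [pow_le_pow_left₀ hq.le hqQ 2, mul_le_mul_of_nonneg_left hpP hν]
  calc A ^ 2 / (2 * P ^ 2 * Q ^ 3) = A * (A / 2) / (P ^ 2 * Q ^ 3) := by ring
    _ ≤ A * (-q ^ 2 - 2 * ν * p + A) / (p ^ 2 * q ^ 3) := by
      gcongr
      exact mul_nonneg hA0 (by linarith)

theorem stmt_1_general (ν T a ε A : ℝ) (hν : 0 < ν)
    (hε : ε ∈ Set.Ioo (0 : ℝ) 1)
    (u : ℝ → ℝ → ℝ)
    (hu : ∀ t x, u t x = A / ((t + ε) * (a - x + ε))) :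
    (∀ t ∈ Set.Icc (0 : ℝ) T, ∀ x ∈ Set.Icc (0 : ℝ) a,
      deriv (fun s => u s x) t - ν * deriv (deriv (fun y => u t y)) x
        + u t x * deriv (fun y => u t y) x
        = A * (-(a - x + ε) ^ 2 - 2 * ν * (t + ε) + A)
            / ((t + ε) ^ 2 * (a - x + ε) ^ 3)) ∧
    (4 * ν * (T + 1) + 2 * (a + 1) ^ 2 ≤ A →
      ∀ t ∈ Set.Icc (0 : ℝ) T, ∀ x ∈ Set.Icc (0 : ℝ) a,
        deriv (fun s => u s x) t - ν * deriv (deriv (fun y => u t y)) x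
          + u t x * deriv (fun y => u t y) x
          ≥ A ^ 2 / (2 * (T + 1) ^ 2 * (a + 1) ^ 3)) := by
  obtain ⟨hε0, hε1⟩ := hε
  have hu' : u = fun t x => A / ((t + ε) * (a - x + ε)) := funext fun t => funext (hu t)
  have hidentity : ∀ t ∈ Set.Icc (0 : ℝ) T, ∀ x ∈ Set.Icc (0 : ℝ) a,
      burgersOperator ν u t x
        = A * (-(a - x + ε) ^ 2 - 2 * ν * (t + ε) + A) / ((t + ε) ^ 2 * (a - x + ε) ^ 3) :=
    fun t ht x hx => hu' ▸ burgersOperator_supersolution_eq ν A a ε t x (by linarith [ht.1]) (by linarith [hx.2])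
  refine ⟨hidentity, fun hA t ht x hx => ?_⟩
  change burgersOperator ν u t x ≥ _
  rw [hidentity t ht x hx]
  exact sq_div_le_burgers_residual hν.le (by linarith [ht.1]) (by linarith [ht.2])
    (by linarith [hx.2]) (by linarith [hx.1]) hA

/-- Supersolution computation from Section 4.4: for
`u_ε(t,x) = A/((t+ε)(a−x+ε))` on `[0,T] × [0,a]`, the exact identity
for `∂ₜu_ε − ν ∂ₓ²u_ε + u_ε ∂ₓu_ε`, and the lower bound when
`A ≥ 4ν(T+1) + 2(a+1)²`. -/
theorem stmt_1 (ν T a ε A : ℝ) (hν : 0 < ν) (hT : 0 < T)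
    (ha : a ∈ Set.Ioo (0 : ℝ) 1) (hε : ε ∈ Set.Ioo (0 : ℝ) 1) (hA : 0 < A)
    (u : ℝ → ℝ → ℝ)
    (hu : ∀ t x, u t x = A / ((t + ε) * (a - x + ε))) :
    (∀ t ∈ Set.Icc (0 : ℝ) T, ∀ x ∈ Set.Icc (0 : ℝ) a,
      deriv (fun s => u s x) t - ν * deriv (deriv (fun y => u t y)) x
        + u t x * deriv (fun y => u t y) x
        = A * (-(a - x + ε) ^ 2 - 2 * ν * (t + ε) + A)
            / ((t + ε) ^ 2 * (a - x + ε) ^ 3)) ∧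
    (4 * ν * (T + 1) + 2 * (a + 1) ^ 2 ≤ A →
      ∀ t ∈ Set.Icc (0 : ℝ) T, ∀ x ∈ Set.Icc (0 : ℝ) a,
        deriv (fun s => u s x) t - ν * deriv (deriv (fun y => u t y)) x
          + u t x * deriv (fun y => u t y) x
          ≥ A ^ 2 / (2 * (T + 1) ^ 2 * (a + 1) ^ 3)) :=
  stmt_1_general ν T a ε A hν hε u hu
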